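/- Let G be an m×m real symmetric matrix. Then there exists a unique vector x ∈ ℝ^m such that, writing G[x] for the matrix obtained from G by replacing its diagonal entries with the entries of x, every diagonal entry of the matrix exponential exp(G[x]) equals 1; consequently exp(G[x]) is a correlation matrix (symmetric positive definite with unit diagonal). -/

import Mathlib

/-!
Let `Φ x = tr exp (G[x]) - ∑ i, x i`. Klein's inequality
`tr exp A + tr ((B - A) exp A) ≤ tr exp B` for symmetric `A`, `B` says that `Φ` is convex with
gradient `diag (exp G[x]) - 1`, so the sought vectors are exactly the critical points of `Φ`. In
eigenbases `(uᵢ)` of `A` and `(vⱼ)` of `B` the defect of Klein's inequality is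
`∑ i j, ⟪uᵢ, vⱼ⟫² D(λᵢ, μⱼ)`, where `D` is the Bregman divergence of `exp`; since `D(a, b) > 0`
for `a ≠ b`, the defect vanishes only when `A = B`, which gives uniqueness. Klein's inequality
for `A = diagonal x` gives `tr exp (G[x]) ≥ ∑ i, exp (x i)`, so `Φ` is coercive and has a global
minimiser, which is a critical point. Finally `exp A = U diag (exp λ) Uᵀ` is positive definite.
-/

open Matrix NormedSpace

theorem abs_le_exp_sub_self (a : ℝ) : |a| ≤ Real.exp a - a := by
  rcases le_total 0 a with ha | ha
  · rw [abs_of_nonneg ha]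
    nlinarith [Real.quadratic_le_exp_of_nonneg ha, sq_nonneg (a - 1)]
  · rw [abs_of_nonpos ha]
    linarith [Real.exp_pos a]

theorem eq_zero_of_forall_sub_mul_nonneg {f : ℝ → ℝ} {a : ℝ} (hf : ContinuousAt f a)
    (h : ∀ t, 0 ≤ (t - a) * f t) : f a = 0 := by
  refine le_antisymm ?_ ?_
  · refine le_of_tendsto (hf.tendsto.mono_left nhdsWithin_le_nhds)
      (eventually_nhdsWithin_of_forall fun t (ht : t ∈ Set.Iio a) => ?_)
    exact nonpos_of_mul_nonneg_right (h t) (sub_neg.mpr ht)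
  · refine ge_of_tendsto (hf.tendsto.mono_left nhdsWithin_le_nhds)
      (eventually_nhdsWithin_of_forall fun t (ht : t ∈ Set.Ioi a) => ?_)
    exact nonneg_of_mul_nonneg_right (h t) (sub_pos.mpr ht)

noncomputable def expDivergence (a b : ℝ) : ℝ :=
  Real.exp b - Real.exp a - (b - a) * Real.exp a

theorem expDivergence_eq_exp_mul (a b : ℝ) :
    expDivergence a b = Real.exp a * (Real.exp (b - a) - (b - a + 1)) := by
  rw [expDivergence, Real.exp_sub]
  field_simp
  ring

theorem expDivergence_nonneg (a b : ℝ) : 0 ≤ expDivergence a b := by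
  rw [expDivergence_eq_exp_mul]
  exact mul_nonneg (Real.exp_nonneg a) (sub_nonneg.mpr (Real.add_one_le_exp _))

theorem expDivergence_eq_zero_iff {a b : ℝ} : expDivergence a b = 0 ↔ a = b := by
  refine ⟨fun h => ?_, fun h => by simp [h, expDivergence]⟩
  by_contra hab
  have := Real.add_one_lt_exp (sub_ne_zero.mpr (Ne.symm hab))
  rw [expDivergence_eq_exp_mul] at h
  nlinarith [Real.exp_pos a]

namespace Matrix

variable {n : Type*} [DecidableEq n]

section withDiag

variable {α : Type*}

def withDiag (G : Matrix n n α) (x : n → α) : Matrix n n α :=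
  of fun i j => if i = j then x i else G i j

@[simp]
theorem withDiag_apply_self (G : Matrix n n α) (x : n → α) (i : n) : G.withDiag x i i = x i := by
  simp [withDiag]

theorem IsSymm.withDiag {G : Matrix n n α} (hG : G.IsSymm) (x : n → α) :
    (G.withDiag x).IsSymm := by
  ext i j
  rcases eq_or_ne i j with rfl | hij
  · rfl
  · simp [Matrix.withDiag, hij, hij.symm, hG.apply]

theorem withDiag_sub_withDiag [AddGroup α] (G : Matrix n n α) (x y : n → α) :
    G.withDiag y - G.withDiag x = diagonal (y - x) := by
  ext i j
  rcases eq_or_ne i j with rfl | hij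
  · simp
  · simp [Matrix.withDiag, hij]

theorem continuous_withDiag [TopologicalSpace α] (G : Matrix n n α) : Continuous G.withDiag :=
  continuous_pi fun i => continuous_pi fun j => by
    by_cases hij : i = j
    · simpa [Matrix.withDiag, hij] using continuous_apply j
    · simpa [Matrix.withDiag, hij] using continuous_const

end withDiag

variable [Fintype n]

theorem continuous_exp : Continuous (exp : Matrix n n ℝ → Matrix n n ℝ) := by
  let _ : NormedRing (Matrix n n ℝ) := Matrix.linftyOpNormedRing
  let _ : NormedAlgebra ℝ (Matrix n n ℝ) := Matrix.linftyOpNormedAlgebra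
  let _ : NormedAlgebra ℚ (Matrix n n ℝ) := Matrix.linftyOpNormedAlgebra
  exact exp_continuous

theorem exp_diagonal_real (d : n → ℝ) : exp (diagonal d) = diagonal (Real.exp ∘ d) := by
  rw [exp_diagonal, Pi.exp_def, Real.exp_eq_exp_ℝ]
  rfl

theorem trace_diagonal_mul (d : n → ℝ) (M : Matrix n n ℝ) :
    trace (diagonal d * M) = ∑ i, d i * M i i := by
  simp [trace, diagonal_mul]

theorem IsSymm.exists_unitary_diagonal {A : Matrix n n ℝ} (hA : A.IsSymm) :
    ∃ U ∈ unitaryGroup n ℝ, ∃ d : n → ℝ, A = U * diagonal d * star U := by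
  have hH : A.IsHermitian := isHermitian_iff_isSymm.mpr hA
  refine ⟨hH.eigenvectorUnitary, hH.eigenvectorUnitary.2, hH.eigenvalues, ?_⟩
  simpa [Unitary.conjStarAlgAut_apply] using hH.spectral_theorem

section UnitaryConj

variable {U V : Matrix n n ℝ}

theorem exp_unitary_conj_diagonal (hU : U ∈ unitaryGroup n ℝ) (d : n → ℝ) :
    exp (U * diagonal d * star U) = U * diagonal (Real.exp ∘ d) * star U := by
  have hinv : U⁻¹ = star U := inv_eq_right_inv (mem_unitaryGroup_iff.mp hU)
  rw [← hinv, exp_conj _ _ (Unitary.isUnit_coe (U := ⟨U, hU⟩)), exp_diagonal_real]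

theorem unitary_conj_diagonal_one (hU : U ∈ unitaryGroup n ℝ) :
    U * diagonal 1 * star U = 1 := by
  rw [Pi.one_def, diagonal_one, Matrix.mul_one, mem_unitaryGroup_iff.mp hU]

theorem unitary_conj_diagonal_mul_unitary_conj_diagonal (hU : U ∈ unitaryGroup n ℝ)
    (d e : n → ℝ) :
    U * diagonal d * star U * (U * diagonal e * star U) = U * diagonal (d * e) * star U := by
  rw [show d * e = fun i => d i * e i from rfl, ← diagonal_mul_diagonal]
  simp only [Matrix.mul_assoc, ← Matrix.mul_assoc (star U) U, mem_unitaryGroup_iff'.mp hU,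
    Matrix.one_mul]

theorem trace_conj_diagonal_mul_conj_diagonal (d e : n → ℝ) :
    trace (U * diagonal d * star U * (V * diagonal e * star V)) =
      ∑ i, ∑ j, (star U * V) i j ^ 2 * (d i * e j) := by
  set W := star U * V
  have hcycle : trace (U * diagonal d * star U * (V * diagonal e * star V)) =
      trace (diagonal d * W * diagonal e * star W) := by
    rw [Matrix.mul_assoc U, Matrix.mul_assoc U, trace_mul_comm U]
    simp only [W, star_mul, star_star, Matrix.mul_assoc]
  rw [hcycle]
  simp only [trace, diag, mul_apply (N := star W), mul_diagonal, diagonal_mul, star_apply,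
    star_trivial]
  exact Finset.sum_congr rfl fun i _ => Finset.sum_congr rfl fun j _ => by ring

theorem unitary_conj_diagonal_eq_of_forall_ne_zero (hU : U ∈ unitaryGroup n ℝ)
    (hV : V ∈ unitaryGroup n ℝ) {d e : n → ℝ} (h : ∀ i j, (star U * V) i j ≠ 0 → d i = e j) :
    U * diagonal d * star U = V * diagonal e * star V := by
  have hW : diagonal d * (star U * V) = star U * V * diagonal e := by
    ext i j
    rw [diagonal_mul, mul_diagonal]
    by_cases hij : (star U * V) i j = 0
    · simp [hij]
    · rw [h i j hij, mul_comm]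
  calc U * diagonal d * star U
      = U * (diagonal d * (star U * V)) * star V := by
        rw [← Matrix.mul_assoc, ← Matrix.mul_assoc, Matrix.mul_assoc _ V,
          mem_unitaryGroup_iff.mp hV, Matrix.mul_one]
    _ = V * diagonal e * star V := by
        rw [hW, ← Matrix.mul_assoc, ← Matrix.mul_assoc, mem_unitaryGroup_iff.mp hU,
          Matrix.one_mul]

noncomputable def traceExpDivergence (A B : Matrix n n ℝ) : ℝ :=
  trace (exp B) - trace (exp A) - trace ((B - A) * exp A)

theorem traceExpDivergence_unitary_conj_diagonal (hU : U ∈ unitaryGroup n ℝ)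
    (hV : V ∈ unitaryGroup n ℝ) (d e : n → ℝ) :
    traceExpDivergence (U * diagonal d * star U) (V * diagonal e * star V) =
      ∑ i, ∑ j, (star U * V) i j ^ 2 * expDivergence (d i) (e j) := by
  have hexpB : trace (exp (V * diagonal e * star V)) =
      trace (U * diagonal 1 * star U * (V * diagonal (Real.exp ∘ e) * star V)) := by
    rw [unitary_conj_diagonal_one hU, Matrix.one_mul, exp_unitary_conj_diagonal hV]
  have hexpA : trace (exp (U * diagonal d * star U)) =
      trace (U * diagonal (Real.exp ∘ d) * star U * (V * diagonal 1 * star V)) := by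
    rw [unitary_conj_diagonal_one hV, Matrix.mul_one, exp_unitary_conj_diagonal hU]
  have hlin : trace ((V * diagonal e * star V - U * diagonal d * star U) *
        exp (U * diagonal d * star U)) =
      trace (U * diagonal (Real.exp ∘ d) * star U * (V * diagonal e * star V)) -
        trace (U * diagonal (d * Real.exp ∘ d) * star U * (V * diagonal 1 * star V)) := by
    rw [sub_mul, trace_sub, trace_mul_comm (V * _ * _), exp_unitary_conj_diagonal hU,
      unitary_conj_diagonal_mul_unitary_conj_diagonal hU, unitary_conj_diagonal_one hV,
      Matrix.mul_one]
  rw [traceExpDivergence, hexpB, hexpA, hlin]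
  simp only [trace_conj_diagonal_mul_conj_diagonal, ← Finset.sum_sub_distrib]
  refine Finset.sum_congr rfl fun i _ => Finset.sum_congr rfl fun j _ => ?_
  simp only [expDivergence, Pi.one_apply, Pi.mul_apply, Function.comp_apply]
  ring

end UnitaryConj

namespace IsSymm

variable {A B : Matrix n n ℝ}

/-- Klein's inequality for the trace exponential. -/
theorem traceExpDivergence_nonneg (hA : A.IsSymm) (hB : B.IsSymm) :
    0 ≤ traceExpDivergence A B := by
  obtain ⟨U, hU, d, rfl⟩ := hA.exists_unitary_diagonal
  obtain ⟨V, hV, e, rfl⟩ := hB.exists_unitary_diagonal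
  rw [traceExpDivergence_unitary_conj_diagonal hU hV]
  exact Finset.sum_nonneg fun i _ => Finset.sum_nonneg fun j _ =>
    mul_nonneg (sq_nonneg _) (expDivergence_nonneg _ _)

theorem eq_of_traceExpDivergence_eq_zero (hA : A.IsSymm) (hB : B.IsSymm)
    (h : traceExpDivergence A B = 0) : A = B := by
  obtain ⟨U, hU, d, rfl⟩ := hA.exists_unitary_diagonal
  obtain ⟨V, hV, e, rfl⟩ := hB.exists_unitary_diagonal
  rw [traceExpDivergence_unitary_conj_diagonal hU hV] at h
  refine unitary_conj_diagonal_eq_of_forall_ne_zero hU hV fun i j hij => ?_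
  have hterm_nonneg : ∀ i j, 0 ≤ (star U * V) i j ^ 2 * expDivergence (d i) (e j) :=
    fun i j => mul_nonneg (sq_nonneg _) (expDivergence_nonneg _ _)
  have hrow := (Finset.sum_eq_zero_iff_of_nonneg fun i _ =>
    Finset.sum_nonneg fun j _ => hterm_nonneg i j).mp h i (Finset.mem_univ i)
  have hterm := (Finset.sum_eq_zero_iff_of_nonneg fun j _ => hterm_nonneg i j).mp hrow j
    (Finset.mem_univ j)
  exact expDivergence_eq_zero_iff.mp ((mul_eq_zero.mp hterm).resolve_left (pow_ne_zero 2 hij))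

theorem posDef_exp (hA : A.IsSymm) : (NormedSpace.exp A).PosDef := by
  obtain ⟨U, hU, d, rfl⟩ := hA.exists_unitary_diagonal
  rw [exp_unitary_conj_diagonal hU,
    IsUnit.posDef_star_right_conjugate_iff (Unitary.isUnit_coe (U := ⟨U, hU⟩)),
    posDef_diagonal_iff]
  exact fun i => Real.exp_pos (d i)

end IsSymm

noncomputable def diagPotential (G : Matrix n n ℝ) (x : n → ℝ) : ℝ :=
  trace (exp (G.withDiag x)) - ∑ i, x i

theorem traceExpDivergence_withDiag (G : Matrix n n ℝ) (x y : n → ℝ) :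
    traceExpDivergence (G.withDiag x) (G.withDiag y) =
      diagPotential G y - diagPotential G x -
        ∑ i, (y i - x i) * (exp (G.withDiag x) i i - 1) := by
  simp only [traceExpDivergence, diagPotential, withDiag_sub_withDiag, trace_diagonal_mul,
    mul_sub, mul_one, Finset.sum_sub_distrib, Pi.sub_apply]
  ring

theorem continuous_diagPotential (G : Matrix n n ℝ) : Continuous (diagPotential G) :=
  (continuous_id.matrix_trace.comp (continuous_exp.comp (continuous_withDiag G))).sub
    (continuous_finsetSum _ fun i _ => continuous_apply i)

variable {G : Matrix n n ℝ}

theorem sum_exp_le_trace_exp_withDiag (hG : G.IsSymm) (x : n → ℝ) :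
    ∑ i, Real.exp (x i) ≤ trace (exp (G.withDiag x)) := by
  have h := (isSymm_diagonal x).traceExpDivergence_nonneg (hG.withDiag x)
  have hoff : trace ((G.withDiag x - diagonal x) * exp (diagonal x)) = 0 := by
    simp [exp_diagonal_real, trace, mul_diagonal]
  rw [traceExpDivergence, hoff, exp_diagonal_real] at h
  simpa [trace] using h

theorem norm_le_diagPotential (hG : G.IsSymm) (x : n → ℝ) : ‖x‖ ≤ diagPotential G x := by
  have hterm : ∀ i, |x i| ≤ Real.exp (x i) - x i := fun i => abs_le_exp_sub_self (x i)
  have hsum : ∑ i, (Real.exp (x i) - x i) ≤ diagPotential G x := by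
    rw [Finset.sum_sub_distrib, diagPotential]
    linarith [sum_exp_le_trace_exp_withDiag hG x]
  refine le_trans ((pi_norm_le_iff_of_nonneg (Finset.sum_nonneg fun i _ =>
    (abs_nonneg _).trans (hterm i))).mpr fun i => ?_) hsum
  exact (hterm i).trans (Finset.single_le_sum (f := fun i => Real.exp (x i) - x i)
    (fun j _ => (abs_nonneg _).trans (hterm j)) (Finset.mem_univ i))

theorem exists_forall_diagPotential_le (hG : G.IsSymm) :
    ∃ x, ∀ y, diagPotential G x ≤ diagPotential G y :=
  (continuous_diagPotential G).exists_forall_le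
    (Filter.tendsto_atTop_mono (norm_le_diagPotential hG) tendsto_norm_cocompact_atTop)

theorem exists_exp_withDiag_apply_self_eq_one (hG : G.IsSymm) :
    ∃ x, ∀ i, exp (G.withDiag x) i i = 1 := by
  obtain ⟨x, hmin⟩ := exists_forall_diagPotential_le hG
  refine ⟨x, fun i => ?_⟩
  set f : ℝ → ℝ := fun t => exp (G.withDiag (Function.update x i t)) i i - 1
  have hf : ContinuousAt f (x i) :=
    (((continuous_apply i).comp ((continuous_apply i).comp (continuous_exp.comp
      ((continuous_withDiag G).comp (continuous_const.update i continuous_id))))).sub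
      continuous_const).continuousAt
  -- Klein's inequality at the perturbed point, against minimality at `x`.
  have hsign : ∀ t, 0 ≤ (t - x i) * f t := by
    intro t
    have h := (hG.withDiag (Function.update x i t)).traceExpDivergence_nonneg (hG.withDiag x)
    rw [traceExpDivergence_withDiag, Fintype.sum_eq_single i fun j hj => by
      simp [Function.update_of_ne hj]] at h
    simp only [Function.update_self] at h
    linarith [hmin (Function.update x i t)]
  simpa [f, sub_eq_zero] using eq_zero_of_forall_sub_mul_nonneg hf hsign

theorem eq_of_exp_withDiag_apply_self_eq_one (hG : G.IsSymm) {x y : n → ℝ}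
    (hx : ∀ i, exp (G.withDiag x) i i = 1) (hy : ∀ i, exp (G.withDiag y) i i = 1) : x = y := by
  have hxy : traceExpDivergence (G.withDiag x) (G.withDiag y) =
      diagPotential G y - diagPotential G x := by
    simp [traceExpDivergence_withDiag, hx]
  have hyx : traceExpDivergence (G.withDiag y) (G.withDiag x) =
      diagPotential G x - diagPotential G y := by
    simp [traceExpDivergence_withDiag, hy]
  have hzero : traceExpDivergence (G.withDiag x) (G.withDiag y) = 0 := by
    linarith [(hG.withDiag x).traceExpDivergence_nonneg (hG.withDiag y),
      (hG.withDiag y).traceExpDivergence_nonneg (hG.withDiag x)]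
  have hGxy := (hG.withDiag x).eq_of_traceExpDivergence_eq_zero (hG.withDiag y) hzero
  funext i
  simpa using congrFun (congrFun hGxy i) i

end Matrix

/-- For a real symmetric matrix `G`, there exists a unique vector `x` such that replacing the
diagonal of `G` by `x` and taking the matrix exponential yields a matrix with unit diagonal;
the resulting matrix is a correlation matrix (symmetric positive definite, unit diagonal). -/
theorem exists_unique_diagonal_adjustment
    {m : ℕ} (G : Matrix (Fin m) (Fin m) ℝ) (hG : G.IsSymm) :
    ∃ x : Fin m → ℝ,
      (∀ i, NormedSpace.exp (Matrix.of fun i' j' => if i' = j' then x i' else G i' j') i i = 1)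
      ∧ (NormedSpace.exp (Matrix.of fun i' j' => if i' = j' then x i' else G i' j')).IsSymm
      ∧ (NormedSpace.exp (Matrix.of fun i' j' => if i' = j' then x i' else G i' j')).PosDef
      ∧ ∀ y : Fin m → ℝ,
          (∀ i, NormedSpace.exp (Matrix.of fun i' j' => if i' = j' then y i' else G i' j') i i = 1)
          → y = x := by
  obtain ⟨x, hx⟩ := exists_exp_withDiag_apply_self_eq_one hG
  exact ⟨x, hx, (hG.withDiag x).exp, (hG.withDiag x).posDef_exp,
    fun y hy => eq_of_exp_withDiag_apply_self_eq_one hG hy hx⟩
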